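/- arXiv:2510.19041 — 2 statements merged into one kernel-verified Lean document; each statement's English description precedes it below -/
import Mathlib

section
/- The map sending a pair (λ, μ) of Young diagrams to the Laurent polynomial (a − a⁻¹) + (t − t⁻¹)²·( a·∑_{(i,j)∈λ} t^{2(j−i)} − a⁻¹·∑_{(i,j)∈μ} t^{−2(j−i)} ) in the Laurent polynomial ring ℤ[a^{±1}, t^{±1}] in two variables is injective; that is, distinct pairs of Young diagrams give distinct Laurent polynomials. -/
/-- The Laurent polynomial `(a − a⁻¹) + (t − t⁻¹)² (a ∑_{□∈λ} t^{2c(□)} − a⁻¹ ∑_{□∈μ} t^{−2c(□)})`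
in `ℤ[a^{±1}, t^{±1}]`, realized as the group algebra `ℤ[ℤ × ℤ]` where the monomial
`a^p t^q` is `single (p, q) 1`, and the content of a cell `(i, j)` is `j − i`. -/
noncomputable def meridianEigenvalue (lam mu : YoungDiagram) : AddMonoidAlgebra ℤ (ℤ × ℤ) :=
  (AddMonoidAlgebra.single ((1 : ℤ), (0 : ℤ)) (1 : ℤ)
      - AddMonoidAlgebra.single ((-1 : ℤ), (0 : ℤ)) (1 : ℤ))
    + (AddMonoidAlgebra.single ((0 : ℤ), (1 : ℤ)) (1 : ℤ)
          - AddMonoidAlgebra.single ((0 : ℤ), (-1 : ℤ)) (1 : ℤ)) ^ 2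
      * (AddMonoidAlgebra.single ((1 : ℤ), (0 : ℤ)) (1 : ℤ)
            * ∑ c ∈ lam.cells,
                AddMonoidAlgebra.single ((0 : ℤ), 2 * ((c.2 : ℤ) - (c.1 : ℤ))) (1 : ℤ)
          - AddMonoidAlgebra.single ((-1 : ℤ), (0 : ℤ)) (1 : ℤ)
            * ∑ c ∈ mu.cells,
                AddMonoidAlgebra.single ((0 : ℤ), -(2 * ((c.2 : ℤ) - (c.1 : ℤ)))) (1 : ℤ))


open Finset

/-- A finite, downward-closed-above-`m` subset of ℕ whose elements are all `≥ m`
is an interval. -/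
lemma finset_lower_eq_Ico (S : Finset ℕ) (m : ℕ)
    (hge : ∀ i ∈ S, m ≤ i)
    (hlow : ∀ i' i, m ≤ i' → i' ≤ i → i ∈ S → i' ∈ S) :
    S = Finset.Ico m (m + S.card) := by
  rcases S.eq_empty_or_nonempty with rfl | hne
  · simp
  · have hM := S.max'_mem hne
    have hSeq : S = Finset.Ico m (S.max' hne + 1) := by
      apply Finset.Subset.antisymm
      · intro i hi
        simp only [Finset.mem_Ico]
        exact ⟨hge i hi, Nat.lt_succ_of_le (S.le_max' i hi)⟩
      · intro i hi
        simp only [Finset.mem_Ico] at hi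
        exact hlow i (S.max' hne) hi.1 (Nat.lt_succ_iff.mp hi.2) hM
    have hcard : S.card = S.max' hne + 1 - m := by
      conv_lhs => rw [hSeq]
      rw [Nat.card_Ico]
    have hmle := hge _ hM
    rw [hcard]
    have h2 : m + (S.max' hne + 1 - m) = S.max' hne + 1 := by omega
    rw [h2]
    exact hSeq

/-- The cells of a Young diagram with content `k`. -/
def dset (Y : YoungDiagram) (k : ℤ) : Finset (ℕ × ℕ) :=
  Y.cells.filter (fun c => (c.2 : ℤ) - (c.1 : ℤ) = k)

lemma dset_eq (Y : YoungDiagram) (k : ℤ) :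
    dset Y k = (Finset.Ico (-k).toNat ((-k).toNat + (dset Y k).card)).image
      (fun i : ℕ => (i, ((i : ℤ) + k).toNat)) := by
  set m : ℕ := (-k).toNat with hm
  set G : Finset ℕ := (dset Y k).image Prod.fst with hG
  have hinj : Set.InjOn Prod.fst (dset Y k : Set (ℕ × ℕ)) := by
    intro c hc c' hc' hfst
    simp only [dset, Finset.coe_filter, Set.mem_setOf_eq] at hc hc'
    have : (c.2 : ℤ) = c.1 + k := by omega
    have : (c'.2 : ℤ) = c'.1 + k := by omega
    have hc2 : c.2 = c'.2 := by omega
    exact Prod.ext hfst hc2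
  have hGcard : G.card = (dset Y k).card := Finset.card_image_of_injOn hinj
  have hmemG : ∀ i ∈ G, m ≤ i := by
    intro i hi
    simp only [hG, Finset.mem_image] at hi
    obtain ⟨c, hc, rfl⟩ := hi
    simp only [dset, Finset.mem_filter] at hc
    omega
  have hcontent : ∀ c ∈ dset Y k, c = (c.1, ((c.1 : ℤ) + k).toNat) := by
    intro c hc
    simp only [dset, Finset.mem_filter] at hc
    have : (c.2 : ℤ) = c.1 + k := by omega
    refine Prod.ext rfl ?_
    omega
  have hlow : ∀ i' i, m ≤ i' → i' ≤ i → i ∈ G → i' ∈ G := by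
    intro i' i hmi' hle hi
    simp only [hG, Finset.mem_image] at hi ⊢
    obtain ⟨c, hc, rfl⟩ := hi
    have hcmem : c ∈ Y.cells := (Finset.mem_filter.mp hc).1
    have hck : (c.2 : ℤ) - c.1 = k := (Finset.mem_filter.mp hc).2
    have hik : (0 : ℤ) ≤ (i' : ℤ) + k := by omega
    refine ⟨(i', ((i' : ℤ) + k).toNat), ?_, rfl⟩
    simp only [dset, Finset.mem_filter]
    constructor
    · exact Y.isLowerSet (a := c) (b := (i', ((i' : ℤ) + k).toNat))
        (Prod.le_def.mpr ⟨hle, by omega⟩) hcmem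
    · omega
  have hGIco : G = Finset.Ico m (m + G.card) := finset_lower_eq_Ico G m hmemG hlow
  rw [hGcard] at hGIco
  ext c
  simp only [Finset.mem_image, Finset.mem_Ico]
  constructor
  · intro hc
    refine ⟨c.1, ?_, (hcontent c hc).symm⟩
    have : c.1 ∈ G := Finset.mem_image_of_mem Prod.fst hc
    rw [hGIco] at this
    simpa using this
  · rintro ⟨i, hi, rfl⟩
    have : i ∈ G := by rw [hGIco]; simpa using hi
    simp only [hG, Finset.mem_image] at this
    obtain ⟨c, hc, rfl⟩ := this
    rw [hcontent c hc] at hc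
    exact hc

lemma ydiag_eq_of_dcount {Y Z : YoungDiagram}
    (h : ∀ k : ℤ, (dset Y k).card = (dset Z k).card) : Y = Z := by
  have hdset : ∀ k : ℤ, dset Y k = dset Z k := by
    intro k
    rw [dset_eq Y k, dset_eq Z k, h k]
  ext c
  rcases c with ⟨i, j⟩
  constructor
  · intro hc
    have : (i, j) ∈ dset Y ((j : ℤ) - i) := by
      simp [dset, hc, (YoungDiagram.mem_cells _).mpr hc]
    rw [hdset] at this
    exact (YoungDiagram.mem_cells _).mp (Finset.mem_filter.mp this).1
  · intro hc
    have : (i, j) ∈ dset Z ((j : ℤ) - i) := by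
      simp [dset, hc, (YoungDiagram.mem_cells _).mpr hc]
    rw [← hdset] at this
    exact (YoungDiagram.mem_cells _).mp (Finset.mem_filter.mp this).1

namespace MeridianAux

open AddMonoidAlgebra

lemma pr_inj (p : ℤ) : Function.Injective (fun q : ℤ => (p, q)) :=
  fun a b h => (Prod.ext_iff.mp h).2

noncomputable def pr (p : ℤ) : AddMonoidAlgebra ℤ (ℤ × ℤ) →+ AddMonoidAlgebra ℤ ℤ :=
  AddMonoidAlgebra.coeffAddEquiv.symm.toAddMonoidHom.comp
    ((Finsupp.comapDomain.addMonoidHom (pr_inj p)).comp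
      AddMonoidAlgebra.coeffAddEquiv.toAddMonoidHom)

lemma pr_apply (p : ℤ) (f : AddMonoidAlgebra ℤ (ℤ × ℤ)) (x : ℤ) : (pr p f).coeff (p, x).2 = f.coeff (p, x) :=
  rfl

lemma pr_single_same (p q : ℤ) (r : ℤ) :
    pr p (AddMonoidAlgebra.single (p, q) r) = AddMonoidAlgebra.single q r := by
  ext x
  rw [show (pr p (AddMonoidAlgebra.single (p, q) r)).coeff x
      = (AddMonoidAlgebra.single (p, q) r : AddMonoidAlgebra ℤ (ℤ × ℤ)).coeff (p, x) from rfl]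
  rw [show (AddMonoidAlgebra.single (p, q) r : AddMonoidAlgebra ℤ (ℤ × ℤ)).coeff (p, x)
      = Finsupp.single ((p : ℤ), q) r (p, x) from rfl]
  rw [AddMonoidAlgebra.coeff_single, Finsupp.single_apply, Finsupp.single_apply]
  simp [Prod.ext_iff]

lemma pr_single_ne {p p' : ℤ} (h : p' ≠ p) (q : ℤ) (r : ℤ) :
    pr p (AddMonoidAlgebra.single (p', q) r) = 0 := by
  ext x
  rw [show (pr p (AddMonoidAlgebra.single (p', q) r)).coeff x
      = Finsupp.single ((p' : ℤ), q) r (p, x) from rfl]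
  rw [Finsupp.single_apply]
  simp [Prod.ext_iff, h]

lemma key (a g : ℤ) :
    (AddMonoidAlgebra.single ((0:ℤ), (1:ℤ)) (1:ℤ)
        - AddMonoidAlgebra.single ((0:ℤ), (-1:ℤ)) (1:ℤ)) ^ 2 *
      (AddMonoidAlgebra.single ((a:ℤ), (0:ℤ)) (1:ℤ)
        * AddMonoidAlgebra.single ((0:ℤ), g) (1:ℤ))
    = AddMonoidAlgebra.single (a, g + 2) 1 - AddMonoidAlgebra.single (a, g) 2
        + AddMonoidAlgebra.single (a, g - 2) 1 := by
  have h2 : (AddMonoidAlgebra.single ((a:ℤ), g) (2:ℤ))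
      = AddMonoidAlgebra.single (a, g) 1 + AddMonoidAlgebra.single (a, g) 1 := by
    rw [← AddMonoidAlgebra.single_add]; norm_num
  rw [h2]
  simp only [sq, sub_mul, mul_sub, AddMonoidAlgebra.single_mul_single, one_mul, mul_one]
  norm_num
  rw [show (2 : ℤ) + g = g + 2 by ring, show (-2 : ℤ) + g = g - 2 by ring]
  abel

lemma eigen_expand (lam mu : YoungDiagram) :
    meridianEigenvalue lam mu =
      (AddMonoidAlgebra.single ((1:ℤ), (0:ℤ)) (1:ℤ)
          - AddMonoidAlgebra.single ((-1:ℤ), (0:ℤ)) (1:ℤ))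
        + (∑ c ∈ lam.cells,
              (AddMonoidAlgebra.single ((1:ℤ), 2 * ((c.2:ℤ) - c.1) + 2) (1:ℤ)
                - AddMonoidAlgebra.single ((1:ℤ), 2 * ((c.2:ℤ) - c.1)) (2:ℤ)
                + AddMonoidAlgebra.single ((1:ℤ), 2 * ((c.2:ℤ) - c.1) - 2) (1:ℤ))
            - ∑ c ∈ mu.cells,
              (AddMonoidAlgebra.single ((-1:ℤ), -(2 * ((c.2:ℤ) - c.1)) + 2) (1:ℤ)
                - AddMonoidAlgebra.single ((-1:ℤ), -(2 * ((c.2:ℤ) - c.1))) (2:ℤ)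
                + AddMonoidAlgebra.single ((-1:ℤ), -(2 * ((c.2:ℤ) - c.1)) - 2) (1:ℤ))) := by
  unfold meridianEigenvalue
  rw [mul_sub]
  congr 1
  congr 1
  · rw [Finset.mul_sum, Finset.mul_sum]
    exact Finset.sum_congr rfl fun c _ => key 1 _
  · rw [Finset.mul_sum, Finset.mul_sum]
    exact Finset.sum_congr rfl fun c _ => key (-1) _

lemma pr_one (lam mu : YoungDiagram) :
    pr 1 (meridianEigenvalue lam mu) =
      AddMonoidAlgebra.single (0:ℤ) (1:ℤ)
        + ∑ c ∈ lam.cells,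
            (AddMonoidAlgebra.single (2 * ((c.2:ℤ) - c.1) + 2) (1:ℤ)
              - AddMonoidAlgebra.single (2 * ((c.2:ℤ) - c.1)) (2:ℤ)
              + AddMonoidAlgebra.single (2 * ((c.2:ℤ) - c.1) - 2) (1:ℤ)) := by
  rw [eigen_expand]
  rw [map_add, map_sub, map_sub, map_sum, map_sum]
  simp only [map_add, map_sub, pr_single_same,
    pr_single_ne (show (-1:ℤ) ≠ 1 by norm_num)]
  simp

lemma pr_neg_one (lam mu : YoungDiagram) :
    pr (-1) (meridianEigenvalue lam mu) =
      (- AddMonoidAlgebra.single (0:ℤ) (1:ℤ))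
        - ∑ c ∈ mu.cells,
            (AddMonoidAlgebra.single (-(2 * ((c.2:ℤ) - c.1)) + 2) (1:ℤ)
              - AddMonoidAlgebra.single (-(2 * ((c.2:ℤ) - c.1))) (2:ℤ)
              + AddMonoidAlgebra.single (-(2 * ((c.2:ℤ) - c.1)) - 2) (1:ℤ)) := by
  rw [eigen_expand]
  rw [map_add, map_sub, map_sub, map_sum, map_sum]
  simp only [map_add, map_sub, pr_single_same,
    pr_single_ne (show (1:ℤ) ≠ -1 by norm_num)]
  simp
  ring

end MeridianAux

namespace MeridianAux

lemma key2 (g : ℤ) :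
    (AddMonoidAlgebra.single (1:ℤ) (1:ℤ)
        - AddMonoidAlgebra.single (-1:ℤ) (1:ℤ) : AddMonoidAlgebra ℤ ℤ) ^ 2
      * AddMonoidAlgebra.single g (1:ℤ)
    = AddMonoidAlgebra.single (g + 2) 1 - AddMonoidAlgebra.single g 2
        + AddMonoidAlgebra.single (g - 2) 1 := by
  have h2 : (AddMonoidAlgebra.single (g:ℤ) (2:ℤ) : AddMonoidAlgebra ℤ ℤ)
      = AddMonoidAlgebra.single g 1 + AddMonoidAlgebra.single g 1 := by
    rw [← AddMonoidAlgebra.single_add]; norm_num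
  rw [h2]
  simp only [sq, sub_mul, mul_sub, AddMonoidAlgebra.single_mul_single, one_mul, mul_one]
  norm_num
  rw [show (2 : ℤ) + g = g + 2 by ring, show (-2 : ℤ) + g = g - 2 by ring]
  abel

lemma u_ne_zero :
    (AddMonoidAlgebra.single (1:ℤ) (1:ℤ)
        - AddMonoidAlgebra.single (-1:ℤ) (1:ℤ) : AddMonoidAlgebra ℤ ℤ) ^ 2 ≠ 0 := by
  apply pow_ne_zero
  intro h
  have h' : (Finsupp.single (1:ℤ) (1:ℤ) - Finsupp.single (-1:ℤ) (1:ℤ) : ℤ →₀ ℤ) = 0 := congrArg AddMonoidAlgebra.coeff h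
  have := DFunLike.congr_fun h' (1:ℤ)
  simp [Finsupp.single_apply, Finsupp.sub_apply] at this

example : NoZeroDivisors (AddMonoidAlgebra ℤ ℤ) := inferInstance

lemma sum_cancel {S S' : Finset (ℕ × ℕ)} {e e' : ℕ × ℕ → ℤ}
    (h : ∑ c ∈ S, (AddMonoidAlgebra.single (e c + 2) (1:ℤ)
            - AddMonoidAlgebra.single (e c) (2:ℤ) + AddMonoidAlgebra.single (e c - 2) (1:ℤ))
        = ∑ c ∈ S', (AddMonoidAlgebra.single (e' c + 2) (1:ℤ)
            - AddMonoidAlgebra.single (e' c) (2:ℤ) + AddMonoidAlgebra.single (e' c - 2) (1:ℤ))) :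
    (∑ c ∈ S, AddMonoidAlgebra.single (e c) (1:ℤ) : AddMonoidAlgebra ℤ ℤ)
      = ∑ c ∈ S', AddMonoidAlgebra.single (e' c) (1:ℤ) := by
  apply mul_left_cancel₀ u_ne_zero
  rw [Finset.mul_sum, Finset.mul_sum]
  rw [Finset.sum_congr rfl fun c _ => key2 (e c), Finset.sum_congr rfl fun c _ => key2 (e' c)]
  exact h

lemma sum_single_apply (S : Finset (ℕ × ℕ)) (e : ℕ × ℕ → ℤ) (x : ℤ) :
    (∑ c ∈ S, AddMonoidAlgebra.single (e c) (1:ℤ) : AddMonoidAlgebra ℤ ℤ).coeff x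
      = ((S.filter fun c => e c = x).card : ℤ) := by
  rw [AddMonoidAlgebra.coeff_sum, Finsupp.finset_sum_apply]
  simp only [AddMonoidAlgebra.coeff_single]
  rw [Finset.sum_congr rfl fun c _ => Finsupp.single_apply (a := e c) (b := (1:ℤ)) (a' := x)]
  rw [Finset.sum_boole]

end MeridianAux

theorem stmt_2 :
    Function.Injective (fun p : YoungDiagram × YoungDiagram => meridianEigenvalue p.1 p.2) := by
  rintro ⟨lam, mu⟩ ⟨lam', mu'⟩ h
  simp only at h
  have h1 := congrArg (MeridianAux.pr 1) h
  rw [MeridianAux.pr_one, MeridianAux.pr_one] at h1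
  have hT := MeridianAux.sum_cancel (add_left_cancel h1)
  have h2 := congrArg (MeridianAux.pr (-1)) h
  rw [MeridianAux.pr_neg_one, MeridianAux.pr_neg_one] at h2
  have hS := MeridianAux.sum_cancel (sub_right_injective h2)
  have hlam : lam = lam' := by
    apply ydiag_eq_of_dcount
    intro k
    have hv := DFunLike.congr_fun
      (congrArg AddMonoidAlgebra.coeff
        (show (∑ c ∈ lam.cells, AddMonoidAlgebra.single (2 * ((c.2:ℤ) - c.1)) (1:ℤ) : AddMonoidAlgebra ℤ ℤ)
          = ∑ c ∈ lam'.cells, AddMonoidAlgebra.single (2 * ((c.2:ℤ) - c.1)) (1:ℤ) from hT)) (2 * k)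
    rw [MeridianAux.sum_single_apply, MeridianAux.sum_single_apply] at hv
    have e1 : lam.cells.filter (fun c => 2 * ((c.2:ℤ) - c.1) = 2 * k) = dset lam k :=
      Finset.filter_congr fun c _ => by constructor <;> intro <;> omega
    have e2 : lam'.cells.filter (fun c => 2 * ((c.2:ℤ) - c.1) = 2 * k) = dset lam' k :=
      Finset.filter_congr fun c _ => by constructor <;> intro <;> omega
    rw [e1, e2] at hv
    exact_mod_cast hv
  have hmu : mu = mu' := by
    apply ydiag_eq_of_dcount
    intro k
    have hv := DFunLike.congr_fun
      (congrArg AddMonoidAlgebra.coeff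
        (show (∑ c ∈ mu.cells, AddMonoidAlgebra.single (-(2 * ((c.2:ℤ) - c.1))) (1:ℤ) : AddMonoidAlgebra ℤ ℤ)
          = ∑ c ∈ mu'.cells, AddMonoidAlgebra.single (-(2 * ((c.2:ℤ) - c.1))) (1:ℤ) from hS)) (-(2 * k))
    rw [MeridianAux.sum_single_apply, MeridianAux.sum_single_apply] at hv
    have e1 : mu.cells.filter (fun c => -(2 * ((c.2:ℤ) - c.1)) = -(2 * k)) = dset mu k :=
      Finset.filter_congr fun c _ => by constructor <;> intro <;> omega
    have e2 : mu'.cells.filter (fun c => -(2 * ((c.2:ℤ) - c.1)) = -(2 * k)) = dset mu' k :=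
      Finset.filter_congr fun c _ => by constructor <;> intro <;> omega
    rw [e1, e2] at hv
    exact_mod_cast hv
  rw [hlam, hmu]
end

section
/- Let λ and μ be Young diagrams. If the multiset of contents of λ equals the multiset of contents of μ, i.e. the multisets { j − i : (i,j) a cell of λ } and { j − i : (i,j) a cell of μ } (counted with multiplicity, as multisets of integers) are equal, then λ = μ. -/
private lemma diag_card (γ : YoungDiagram) (i j : ℕ) :
    (i, j) ∈ γ ↔ min i j <
      (γ.cells.filter (fun p : ℕ × ℕ => (p.2 : ℤ) - (p.1 : ℤ) = (j : ℤ) - i)).card := by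
  constructor
  · intro h
    have hsub : (Finset.range (min i j + 1)).image
        (fun k => (i - min i j + k, j - min i j + k)) ⊆
        γ.cells.filter (fun p : ℕ × ℕ => (p.2 : ℤ) - (p.1 : ℤ) = (j : ℤ) - i) := by
      intro p hp
      simp only [Finset.mem_image, Finset.mem_range] at hp
      obtain ⟨k, hk, rfl⟩ := hp
      rw [Finset.mem_filter, YoungDiagram.mem_cells]
      exact ⟨γ.up_left_mem (by omega) (by omega) h, by omega⟩
    have hcard := Finset.card_le_card hsub
    rw [Finset.card_image_of_injective _ (by intro a b hab; simpa using hab),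
      Finset.card_range] at hcard
    omega
  · intro hn
    by_contra h'
    set F := γ.cells.filter (fun p : ℕ × ℕ => (p.2 : ℤ) - (p.1 : ℤ) = (j : ℤ) - i) with hF
    have key : ∀ p ∈ F, min p.1 p.2 < min i j := by
      intro p hp
      rw [hF, Finset.mem_filter, YoungDiagram.mem_cells] at hp
      by_contra hge
      push_neg at hge
      exact h' (γ.up_left_mem (show i ≤ p.1 by omega) (show j ≤ p.2 by omega) hp.1)
    have hinj : Set.InjOn (fun p : ℕ × ℕ => min p.1 p.2) F := by
      intro p hp q hq hpq
      simp only [hF, Finset.mem_coe, Finset.mem_filter] at hp hq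
      have h1 := hp.2
      have h2 := hq.2
      simp only at hpq
      have : p.1 = q.1 ∧ p.2 = q.2 := by omega
      exact Prod.ext this.1 this.2
    have himg : F.image (fun p : ℕ × ℕ => min p.1 p.2) ⊆ Finset.range (min i j) := by
      intro m hm
      simp only [Finset.mem_image] at hm
      obtain ⟨p, hp, rfl⟩ := hm
      exact Finset.mem_range.mpr (key p hp)
    have := Finset.card_le_card himg
    rw [Finset.card_image_of_injOn hinj, Finset.card_range] at this
    omega

private lemma count_eq (γ : YoungDiagram) (i j : ℕ) :
    (γ.cells.filter (fun p : ℕ × ℕ => (p.2 : ℤ) - (p.1 : ℤ) = (j : ℤ) - i)).card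
      = Multiset.count ((j : ℤ) - i)
        (Multiset.map (fun c : ℕ × ℕ => (c.2 : ℤ) - (c.1 : ℤ)) γ.cells.val) := by
  rw [Multiset.count_map]
  simp [Finset.card, Finset.filter, eq_comm]

theorem stmt_3 (lam mu : YoungDiagram)
    (h : Multiset.map (fun c : ℕ × ℕ => (c.2 : ℤ) - (c.1 : ℤ)) lam.cells.val
        = Multiset.map (fun c : ℕ × ℕ => (c.2 : ℤ) - (c.1 : ℤ)) mu.cells.val) :
    lam = mu := by
  ext ⟨i, j⟩
  rw [YoungDiagram.mem_cells, YoungDiagram.mem_cells, diag_card lam i j, diag_card mu i j, count_eq, count_eq, h]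
end
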